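/- arXiv:math/0607324 — 3 statements merged into one kernel-verified Lean document; each statement's English description precedes it below -/
import Mathlib

section
/- (Carlitz identity) For all nonnegative integers α and β, the Bernoulli numbers satisfy (−1)^α · Σ_{i=0}^{α} C(α, i) · B_{i+β} = (−1)^β · Σ_{i=0}^{β} C(β, i) · B_{i+α}. -/
open Finset

private def carlitzF (a b : ℕ) : ℚ :=
  ∑ i ∈ Finset.range (a + 1), (a.choose i : ℚ) * bernoulli (i + b)

private lemma carlitzF_rec (a b : ℕ) :
    carlitzF (a + 1) b = carlitzF a b + carlitzF a (b + 1) := by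
  unfold carlitzF
  rw [Finset.sum_range_succ' (fun i => ((a+1).choose i : ℚ) * bernoulli (i + b))]
  have h1 : ∀ i, ((a+1).choose (i+1) : ℚ) = (a.choose i : ℚ) + (a.choose (i+1) : ℚ) := by
    intro i
    rw [Nat.choose_succ_succ]
    push_cast; ring
  simp only [h1, add_mul, Finset.sum_add_distrib]
  have h2 : ∑ i ∈ Finset.range (a + 1), (a.choose i : ℚ) * bernoulli (i + 1 + b) =
      ∑ i ∈ Finset.range (a + 1), (a.choose i : ℚ) * bernoulli (i + (b + 1)) := by
    apply Finset.sum_congr rfl; intro i _; ring_nf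
  have h3 : ∑ i ∈ Finset.range (a + 1), (a.choose (i+1) : ℚ) * bernoulli (i + 1 + b) +
      ((a+1).choose 0 : ℚ) * bernoulli (0 + b) =
      ∑ i ∈ Finset.range (a + 1), (a.choose i : ℚ) * bernoulli (i + b) := by
    rw [Finset.sum_range_succ]
    simp only [Nat.choose_succ_self, Nat.cast_zero, zero_mul, add_zero,
      Nat.choose_zero_right, Nat.cast_one]
    rw [Finset.sum_range_succ' (fun i => (a.choose i : ℚ) * bernoulli (i + b))]
    simp
  rw [h2]
  linarith [h3]

private lemma carlitz_base (b : ℕ) :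
    (-1 : ℚ) ^ (0:ℕ) * carlitzF 0 b = (-1 : ℚ) ^ b * carlitzF b 0 := by
  have hF0 : carlitzF 0 b = bernoulli b := by simp [carlitzF]
  have hFb : carlitzF b 0 = bernoulli b + (if b = 1 then 1 else 0) := by
    unfold carlitzF
    rw [Finset.sum_range_succ]
    simp only [add_zero, Nat.choose_self, Nat.cast_one, one_mul]
    rw [sum_bernoulli]
    ring
  rw [hF0, hFb, pow_zero, one_mul]
  rcases Nat.lt_or_ge b 2 with hb | hb
  · interval_cases b <;> norm_num [bernoulli_one]
  · rw [if_neg (by omega)]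
    rcases Nat.even_or_odd b with he | ho
    · rw [he.neg_one_pow]; ring
    · have : bernoulli b = 0 := by
        rw [bernoulli_eq_bernoulli'_of_ne_one (by omega)]
        exact bernoulli'_eq_zero_of_odd ho (by omega)
      simp [this]

private lemma carlitz_aux : ∀ a b : ℕ,
    (-1 : ℚ) ^ a * carlitzF a b = (-1 : ℚ) ^ b * carlitzF b a := by
  intro a
  induction a with
  | zero => exact carlitz_base
  | succ a ih =>
    intro b
    have h1 := ih b
    have h2 := ih (b + 1)
    have hr1 := carlitzF_rec a b
    have hr2 := carlitzF_rec b a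
    have : (-1 : ℚ) ^ (a+1) = -(-1:ℚ)^a := by ring
    rw [this, hr1]
    have h2' : (-1 : ℚ) ^ a * carlitzF a (b+1) = -((-1:ℚ)^b * carlitzF (b+1) a) := by
      rw [h2]; ring
    have hr2' : carlitzF b (a + 1) = carlitzF (b+1) a - carlitzF b a := by
      linarith [hr2]
    rw [hr2']
    nlinarith [h1, h2']

/-- Carlitz identity for Bernoulli numbers:
`(-1)^α ∑_{i=0}^α C(α,i) B_{i+β} = (-1)^β ∑_{i=0}^β C(β,i) B_{i+α}`. -/
theorem carlitz_identity (α β : ℕ) :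
    (-1 : ℚ) ^ α * ∑ i ∈ Finset.range (α + 1), (α.choose i : ℚ) * bernoulli (i + β) =
    (-1 : ℚ) ^ β * ∑ i ∈ Finset.range (β + 1), (β.choose i : ℚ) * bernoulli (i + α) := by
  exact carlitz_aux α β
end

section
/- For all positive integers a and b, the following sum vanishes: (−1)^b · Σ_{h=b}^{a+b} C(h, b)·C(a+b+1, h+1)·B_{h+1}(0) + 1 + (−1)^a · Σ_{h=a}^{a+b} C(h, a)·C(a+b+1, h+1)·B_{h+1}(0) = 0. -/
section GrrAux
open Finset Polynomial

/-- `T p q = ∑_{j=0}^{q} C(q,j) B_{p+j}` -/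
noncomputable def Tb (p q : ℕ) : ℚ := ∑ j ∈ range (q+1), (q.choose j : ℚ) * _root_.bernoulli (p+j)

lemma Tb_rec (p q : ℕ) : Tb p (q+1) = Tb p q + Tb (p+1) q := by
  have hB : Tb (p+1) q = ∑ j ∈ range (q+1), (q.choose j : ℚ) * _root_.bernoulli (p+(j+1)) := by
    unfold Tb
    exact sum_congr rfl fun j _ => by rw [show p+1+j = p+(j+1) by omega]
  have hA : Tb p q = ∑ j ∈ range q, (q.choose (j+1) : ℚ) * _root_.bernoulli (p+(j+1))
      + (q.choose 0 : ℚ) * _root_.bernoulli (p+0) := by unfold Tb; exact sum_range_succ' _ _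
  have h1 : Tb p (q+1)
      = ∑ j ∈ range (q+1), ((q+1).choose (j+1) : ℚ) * _root_.bernoulli (p+(j+1))
        + ((q+1).choose 0 : ℚ) * _root_.bernoulli (p+0) := by unfold Tb; exact sum_range_succ' _ _
  have h4 : ∑ j ∈ range (q+1), ((q+1).choose (j+1) : ℚ) * _root_.bernoulli (p+(j+1))
      = ∑ j ∈ range (q+1), (q.choose j : ℚ) * _root_.bernoulli (p+(j+1))
        + ∑ j ∈ range (q+1), (q.choose (j+1) : ℚ) * _root_.bernoulli (p+(j+1)) := by
    rw [← sum_add_distrib]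
    refine sum_congr rfl fun j _ => ?_
    rw [Nat.choose_succ_succ]; push_cast; ring
  have h5 : ∑ j ∈ range (q+1), (q.choose (j+1) : ℚ) * _root_.bernoulli (p+(j+1))
      = ∑ j ∈ range q, (q.choose (j+1) : ℚ) * _root_.bernoulli (p+(j+1)) := by
    rw [sum_range_succ, Nat.choose_succ_self]; simp
  rw [h1, h4, h5, hB, hA]; simp; ring

lemma Tb_base (p : ℕ) : Tb 0 p = (-1 : ℚ)^p * _root_.bernoulli p := by
  have hs : Tb 0 p = (∑ j ∈ range p, (p.choose j : ℚ) * _root_.bernoulli j) + _root_.bernoulli p := by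
    unfold Tb; rw [sum_range_succ]; simp
  rw [hs, _root_.sum_bernoulli]
  rcases Nat.even_or_odd p with he | ho
  · rw [he.neg_one_pow]
    rcases eq_or_ne p 1 with h1 | h1
    · exact absurd (h1 ▸ he) (by decide)
    · simp [h1]
  · rw [ho.neg_one_pow]
    rcases eq_or_ne p 1 with h1 | h1
    · subst h1; rw [_root_.bernoulli_one]; norm_num
    · have : _root_.bernoulli p = 0 := by
        rw [_root_.bernoulli_eq_bernoulli'_of_ne_one h1]
        rw [_root_.bernoulli'_eq_zero_of_odd ho (by rcases ho with ⟨k, rfl⟩; omega)]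
      simp [this, h1]

lemma carlitz : ∀ q p : ℕ, (-1 : ℚ)^p * Tb p q = (-1 : ℚ)^q * Tb q p := by
  intro q
  induction q with
  | zero =>
    intro p
    have : Tb p 0 = _root_.bernoulli p := by unfold Tb; simp
    rw [this, Tb_base p]; ring
  | succ q ih =>
    intro p
    rw [Tb_rec p q]
    have e1 := ih p
    have e2 := ih (p+1)
    have e3 : Tb q (p+1) = Tb q p + Tb (q+1) p := Tb_rec q p
    have hp : (-1:ℚ)^(p+1) = -(-1:ℚ)^p := by ring
    rw [hp] at e2
    rw [show (-1:ℚ)^(q+1) = -(-1:ℚ)^q by ring]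
    linear_combination e1 - e2 - (-1:ℚ)^q * e3

noncomputable def Wb (N m : ℕ) : ℚ :=
  ∑ k ∈ range (N+1), (N.choose k : ℚ) * (k.choose m : ℚ) * _root_.bernoulli k

lemma Wb_eq (N m : ℕ) (hm : m ≤ N) : Wb N m = (N.choose m : ℚ) * Tb m (N-m) := by
  unfold Wb
  rw [show ∑ k ∈ range (N+1), (N.choose k : ℚ) * (k.choose m : ℚ) * _root_.bernoulli k
      = ∑ k ∈ Ico m (N+1), (N.choose k : ℚ) * (k.choose m : ℚ) * _root_.bernoulli k by
    refine (sum_subset (fun x hx => mem_range.2 (mem_Ico.1 hx).2) fun x hx hx' => ?_).symm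
    have hxm : x < m := by
      by_contra h
      exact hx' (mem_Ico.2 ⟨Nat.le_of_not_lt h, mem_range.1 hx⟩)
    rw [Nat.choose_eq_zero_of_lt hxm]; simp]
  rw [sum_Ico_eq_sum_range]
  rw [show N + 1 - m = (N - m) + 1 by omega]
  rw [Tb, mul_sum]
  refine sum_congr rfl fun j hj => ?_
  have hj' : m + j ≤ N := by have := mem_range.1 hj; omega
  have hc := Nat.choose_mul (n := N) (Nat.le_add_right m j)
  have hc' : ((N.choose (m+j) : ℚ) * ((m+j).choose m : ℚ))
      = (N.choose m : ℚ) * ((N-m).choose j : ℚ) := by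
    rw [show (m+j) - m = j from by omega] at hc
    exact_mod_cast congrArg (Nat.cast : ℕ → ℚ) hc
  rw [mul_assoc, ← mul_assoc (N.choose (m+j) : ℚ), hc']
  ring

lemma Wb_key (N m : ℕ) (hm : m ≤ N) :
    (-1 : ℚ)^m * Wb N m = (-1 : ℚ)^(N-m) * Wb N (N-m) := by
  rw [Wb_eq N m hm, Wb_eq N (N-m) (Nat.sub_le N m), Nat.sub_sub_self hm,
    Nat.choose_symm hm]
  have := carlitz (N-m) m
  ring_nf
  ring_nf at this
  linear_combination (N.choose m : ℚ) * this

lemma coeffA (h m : ℕ) : ((1 - X : ℚ[X])^h).coeff m = (-1:ℚ)^m * (h.choose m : ℚ) := by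
  have hexp : (1 - X : ℚ[X])^h
      = ∑ k ∈ range (h+1), C ((-1:ℚ)^k * (h.choose k : ℚ)) * X^k := by
    rw [sub_eq_add_neg, add_comm, add_pow]
    refine sum_congr rfl fun k _ => ?_
    rw [C_mul, C_eq_natCast]
    rw [show (C ((-1:ℚ)^k) : ℚ[X]) = (-1)^k by simp]
    ring
  rw [hexp, finset_sum_coeff]
  simp only [coeff_C_mul, coeff_X_pow, mul_ite, mul_one, mul_zero]
  rw [sum_ite_eq (range (h+1)) m]
  by_cases hm : m ≤ h
  · simp [Nat.lt_succ_of_le hm]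
  · rw [if_neg (by simp; omega), Nat.choose_eq_zero_of_lt (by omega)]
    simp

lemma coeffB (p h m : ℕ) : ((X:ℚ[X])^p * (X - 1)^h).coeff m
    = if p ≤ m ∧ m ≤ p + h then (-1:ℚ)^(h-(m-p)) * (h.choose (m-p) : ℚ) else 0 := by
  have hexp : (X:ℚ[X])^p * (X - 1)^h
      = ∑ k ∈ range (h+1), C ((-1:ℚ)^(h-k) * (h.choose k : ℚ)) * X^(p+k) := by
    rw [sub_eq_add_neg, add_pow, mul_sum]
    refine sum_congr rfl fun k _ => ?_
    rw [C_mul, C_eq_natCast]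
    rw [show (C ((-1:ℚ)^(h-k)) : ℚ[X]) = (-1)^(h-k) by simp]
    rw [pow_add]
    ring
  rw [hexp, finset_sum_coeff]
  simp only [coeff_C_mul, coeff_X_pow, mul_ite, mul_one, mul_zero]
  by_cases hp : p ≤ m
  · have hiff : ∀ k, (m = p + k) ↔ (m - p = k) := fun k => by omega
    rw [sum_congr rfl fun k _ => if_congr (hiff k) rfl rfl]
    rw [sum_ite_eq (range (h+1)) (m-p)]
    by_cases hmh : m ≤ p + h
    · rw [if_pos (mem_range.2 (by omega)), if_pos ⟨hp, hmh⟩]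
    · rw [if_neg (by simp; omega), if_neg (by tauto),
        ]
  · rw [if_neg (by tauto)]
    refine sum_eq_zero fun k _ => if_neg (by omega)

noncomputable def Gp (n : ℕ) : ℚ[X] :=
  ∑ h ∈ range (n+1), C (((n+1).choose (h+1) : ℚ) * _root_.bernoulli (h+1)) * (1 - X)^h

noncomputable def Gh (n : ℕ) : ℚ[X] :=
  ∑ h ∈ range (n+1), C (((n+1).choose (h+1) : ℚ) * _root_.bernoulli (h+1)) * (X^(n-h) * (X-1)^h)

noncomputable def Rp (n : ℕ) : ℚ[X] :=
  ∑ k ∈ range (n+2), C (((n+1).choose k : ℚ) * _root_.bernoulli k) * (1 - X)^k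

noncomputable def Bp (n : ℕ) : ℚ[X] :=
  ∑ k ∈ range (n+2), C (((n+1).choose k : ℚ) * _root_.bernoulli k) * (X^(n+1-k) * (X-1)^k)

lemma L1 (n : ℕ) : (1 - X : ℚ[X]) * Gp n = Rp n - 1 := by
  have hR : Rp n = (∑ h ∈ range (n+1),
      C (((n+1).choose (h+1) : ℚ) * _root_.bernoulli (h+1)) * (1 - X)^(h+1)) + 1 := by
    rw [Rp, sum_range_succ']; simp
  rw [hR, Gp, mul_sum, add_sub_cancel_right]
  exact sum_congr rfl fun h _ => by ring

lemma L2 (n : ℕ) : (1 - X : ℚ[X]) * Gh n = X^(n+1) - Bp n := by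
  have hB : Bp n = (∑ h ∈ range (n+1),
      C (((n+1).choose (h+1) : ℚ) * _root_.bernoulli (h+1)) * (X^(n-h) * (X-1)^(h+1)))
      + X^(n+1) := by
    rw [Bp, sum_range_succ']; simp [Nat.succ_sub_succ]
  rw [hB, Gh, mul_sum]
  rw [show ∀ S : ℚ[X], X^(n+1) - (S + X^(n+1)) = -S from fun S => by ring]
  rw [← sum_neg_distrib]
  exact sum_congr rfl fun h _ => by ring

lemma L3 (n : ℕ) : Rp n = Bp n := by
  ext m
  rw [Rp, Bp, finset_sum_coeff, finset_sum_coeff]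
  simp only [coeff_C_mul, coeffA, coeffB]
  by_cases hm : m ≤ n + 1
  · have hL : ∑ k ∈ range (n+2),
        ((n+1).choose k : ℚ) * _root_.bernoulli k * ((-1)^m * (k.choose m : ℚ))
        = (-1:ℚ)^m * Wb (n+1) m := by
      rw [Wb, mul_sum]
      exact sum_congr rfl fun k _ => by ring
    have hR : ∑ k ∈ range (n+2),
        ((n+1).choose k : ℚ) * _root_.bernoulli k *
          (if n+1-k ≤ m ∧ m ≤ (n+1-k) + k then
            (-1:ℚ)^(k-(m-(n+1-k))) * (k.choose (m-(n+1-k)) : ℚ) else 0)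
        = (-1:ℚ)^(n+1-m) * Wb (n+1) (n+1-m) := by
      rw [Wb, mul_sum]
      refine sum_congr rfl fun k hk => ?_
      have hk' : k ≤ n + 1 := by have := mem_range.1 hk; omega
      by_cases hqk : n+1-m ≤ k
      · rw [if_pos ⟨by omega, by omega⟩]
        rw [show m - (n+1-k) = k - (n+1-m) by omega]
        rw [show k - (k - (n+1-m)) = n+1-m by omega]
        rw [Nat.choose_symm hqk]
        ring
      · rw [if_neg (by omega), Nat.choose_eq_zero_of_lt (show k < n+1-m by omega)]
        simp
    rw [hL, hR]
    exact Wb_key (n+1) m hm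
  · refine Eq.trans (sum_eq_zero fun k hk => ?_) (Eq.symm (sum_eq_zero fun k hk => ?_))
    · have hk' : k ≤ n + 1 := by have := mem_range.1 hk; omega
      rw [Nat.choose_eq_zero_of_lt (show k < m by omega)]; simp
    · have hk' : k ≤ n + 1 := by have := mem_range.1 hk; omega
      rw [if_neg (by omega)]; simp

lemma L4 (n : ℕ) : Gp n + Gh n = -∑ i ∈ range (n+1), (X:ℚ[X])^i := by
  have hx : (1 - X : ℚ[X]) ≠ 0 := fun hcon => by
    have := congrArg (fun p : ℚ[X] => p.coeff 1) hcon
    simp [Polynomial.coeff_one] at this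
  apply mul_left_cancel₀ hx
  rw [mul_add, L1, L2, L3]
  have hg := geom_sum_mul (X:ℚ[X]) (n+1)
  linear_combination -hg

lemma grr_aux (a b : ℕ) (ha : 0 < a) (hb : 0 < b) :
    (-1 : ℚ) ^ b * (∑ h ∈ Finset.Icc b (a + b),
        (h.choose b : ℚ) * ((a + b + 1).choose (h + 1) : ℚ) * _root_.bernoulli (h + 1))
    + 1
    + (-1 : ℚ) ^ a * (∑ h ∈ Finset.Icc a (a + b),
        (h.choose a : ℚ) * ((a + b + 1).choose (h + 1) : ℚ) * _root_.bernoulli (h + 1)) = 0 := by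
  set n := a + b with hn
  have hG : (Gp n).coeff b = (-1:ℚ)^b * ∑ h ∈ Icc b n,
      (h.choose b : ℚ) * (((n+1).choose (h+1) : ℚ) * _root_.bernoulli (h+1)) := by
    rw [Gp, finset_sum_coeff]
    simp only [coeff_C_mul, coeffA]
    have hsub : ∑ h ∈ Icc b n,
        (h.choose b : ℚ) * (((n+1).choose (h+1) : ℚ) * _root_.bernoulli (h+1))
        = ∑ h ∈ range (n+1),
        (h.choose b : ℚ) * (((n+1).choose (h+1) : ℚ) * _root_.bernoulli (h+1)) := by
      refine sum_subset (fun x hx => mem_range.2 (by have := (mem_Icc.1 hx).2; omega)) ?_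
      intro x hx hx'
      have hxb : x < b := by
        have hx1 := mem_range.1 hx
        simp only [mem_Icc, not_and, not_le] at hx'
        by_contra hcon
        have := hx' (by omega); omega
      rw [Nat.choose_eq_zero_of_lt (show x < b from hxb)]; simp
    rw [hsub, mul_sum]
    exact sum_congr rfl fun h _ => by ring
  have hH : (Gh n).coeff b = (-1:ℚ)^a * ∑ h ∈ Icc a n,
      (h.choose a : ℚ) * (((n+1).choose (h+1) : ℚ) * _root_.bernoulli (h+1)) := by
    rw [Gh, finset_sum_coeff]
    simp only [coeff_C_mul, coeffB]
    have h1 : ∑ h ∈ range (n+1), ((n+1).choose (h+1) : ℚ) * _root_.bernoulli (h+1) *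
          (if n-h ≤ b ∧ b ≤ (n-h)+h then
            (-1:ℚ)^(h-(b-(n-h))) * (h.choose (b-(n-h)) : ℚ) else 0)
        = ∑ h ∈ range (n+1), (if a ≤ h then
            (-1:ℚ)^a * ((h.choose a : ℚ) * (((n+1).choose (h+1) : ℚ) * _root_.bernoulli (h+1)))
            else 0) := by
      refine sum_congr rfl fun h hh => ?_
      have hh' : h ≤ n := by have := mem_range.1 hh; omega
      by_cases hah : a ≤ h
      · rw [if_pos ⟨by omega, by omega⟩, if_pos hah]
        rw [show b - (n-h) = h - a by omega, show h - (h-a) = a by omega, Nat.choose_symm hah]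
        ring
      · rw [if_neg (by omega), if_neg hah]; simp
    rw [h1]
    have h2 : ∑ h ∈ range (n+1), (if a ≤ h then
            (-1:ℚ)^a * ((h.choose a : ℚ) * (((n+1).choose (h+1) : ℚ) * _root_.bernoulli (h+1)))
            else 0)
        = ∑ h ∈ Icc a n, (if a ≤ h then
            (-1:ℚ)^a * ((h.choose a : ℚ) * (((n+1).choose (h+1) : ℚ) * _root_.bernoulli (h+1)))
            else 0) := by
      refine (sum_subset (fun x hx => mem_range.2 (by have := (mem_Icc.1 hx).2; omega)) ?_).symm
      intro x hx hx'
      refine if_neg fun hcon => ?_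
      have := mem_range.1 hx
      exact hx' (mem_Icc.2 ⟨hcon, by omega⟩)
    rw [h2, mul_sum]
    refine sum_congr rfl fun h hh => by rw [if_pos (mem_Icc.1 hh).1]
  have hsum := congrArg (fun p : ℚ[X] => p.coeff b) (L4 n)
  simp only [coeff_add] at hsum
  have hone : ((-∑ i ∈ range (n+1), (X:ℚ[X])^i)).coeff b = -1 := by
    rw [coeff_neg, finset_sum_coeff]
    simp only [coeff_X_pow]
    rw [sum_ite_eq (range (n+1)) b (fun _ => (1:ℚ)), if_pos (mem_range.2 (by omega))]
  rw [hG, hH, hone] at hsum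
  have e1 : ∑ h ∈ Icc b n, (h.choose b : ℚ) * ((n+1).choose (h+1) : ℚ) * _root_.bernoulli (h+1)
      = ∑ h ∈ Icc b n, (h.choose b : ℚ) * (((n+1).choose (h+1) : ℚ) * _root_.bernoulli (h+1)) :=
    sum_congr rfl fun h _ => by ring
  have e2 : ∑ h ∈ Icc a n, (h.choose a : ℚ) * ((n+1).choose (h+1) : ℚ) * _root_.bernoulli (h+1)
      = ∑ h ∈ Icc a n, (h.choose a : ℚ) * (((n+1).choose (h+1) : ℚ) * _root_.bernoulli (h+1)) :=
    sum_congr rfl fun h _ => by ring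
  rw [e1, e2]
  linarith [hsum]

end GrrAux

/-- Vanishing of the mixed coefficients in the GRR computation: for positive `a, b`,
`(-1)^b ∑_{h=b}^{a+b} C(h,b) C(a+b+1,h+1) B_{h+1} + 1
  + (-1)^a ∑_{h=a}^{a+b} C(h,a) C(a+b+1,h+1) B_{h+1} = 0`. -/
theorem grr_mixed_coefficients_vanish (a b : ℕ) (ha : 0 < a) (hb : 0 < b) :
    (-1 : ℚ) ^ b * (∑ h ∈ Finset.Icc b (a + b),
        (h.choose b : ℚ) * ((a + b + 1).choose (h + 1) : ℚ) * bernoulli (h + 1))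
    + 1
    + (-1 : ℚ) ^ a * (∑ h ∈ Finset.Icc a (a + b),
        (h.choose a : ℚ) * ((a + b + 1).choose (h + 1) : ℚ) * bernoulli (h + 1)) = 0 :=
  grr_aux a b ha hb
end

section
/- Let r ≥ 2 be an integer and let ξ be a primitive r-th root of unity in the complex numbers. Then for every integer q with 0 ≤ q ≤ r − 1, Σ_{i=1}^{r−1} ξ^{qi}/((1 − ξ^i)(1 − ξ^{−i})) = (r² − 1)/12 − q(r − q)/2. -/
open Finset

lemma aux_sum1 (n : ℕ) : ∑ m ∈ Finset.range n, (m : ℂ) = (n : ℂ) * ((n : ℂ) - 1) / 2 := by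
  induction n with
  | zero => simp
  | succ k ih => rw [Finset.sum_range_succ, ih]; push_cast; ring

lemma aux_sum2 (n : ℕ) : ∑ m ∈ Finset.range n, (m : ℂ) * ((m : ℂ) - 1) =
    (n : ℂ) * ((n : ℂ) - 1) * ((n : ℂ) - 2) / 3 := by
  induction n with
  | zero => simp
  | succ k ih => rw [Finset.sum_range_succ, ih]; push_cast; ring

/-- For a primitive `r`-th root of unity `ξ` and `0 ≤ q ≤ r - 1`,
`∑_{i=1}^{r-1} ξ^{qi} / ((1 - ξ^i)(1 - ξ^{-i})) = (r² - 1)/12 - q(r - q)/2`. -/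
theorem sum_primitive_root_quotient (r : ℕ) (hr : 2 ≤ r) (ξ : ℂ)
    (hξ : IsPrimitiveRoot ξ r) (q : ℕ) (hq : q ≤ r - 1) :
    (∑ i ∈ Finset.Ico 1 r, ξ ^ (q * i) / ((1 - ξ ^ i) * (1 - (ξ ^ i)⁻¹))) =
      ((r : ℂ) ^ 2 - 1) / 12 - (q : ℂ) * ((r : ℂ) - q) / 2 := by
  have hr0 : (r : ℂ) ≠ 0 := Nat.cast_ne_zero.mpr (by omega)
  have hξ0 : ξ ≠ 0 := hξ.ne_zero (by omega)
  set S : ℕ → ℂ := fun m =>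
    ∑ i ∈ Finset.Ico 1 r, ξ ^ (m * i) / ((1 - ξ ^ i) * (1 - (ξ ^ i)⁻¹)) with hS
  have hxne : ∀ i ∈ Finset.Ico 1 r, ξ ^ i ≠ 1 := by
    intro i hi
    rw [Finset.mem_Ico] at hi
    exact hξ.pow_ne_one_of_pos_of_lt (by omega) hi.2
  have hx0 : ∀ i : ℕ, ξ ^ i ≠ 0 := fun i => pow_ne_zero i hξ0
  -- geometric sum over exponents for fixed i
  have hgeom : ∀ i ∈ Finset.Ico 1 r, ∑ m ∈ Finset.range r, (ξ ^ i) ^ m = 0 := by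
    intro i hi
    rw [geom_sum_eq (hxne i hi)]
    have : (ξ ^ i) ^ r = 1 := by rw [← pow_mul, mul_comm, pow_mul, hξ.pow_eq_one, one_pow]
    rw [this, sub_self, zero_div]
  -- sum over i of ξ^(m i) for r not dividing m
  have hsum_pow : ∀ m : ℕ, ¬ (r ∣ m) → ∑ i ∈ Finset.Ico 1 r, ξ ^ (m * i) = -1 := by
    intro m hm
    have hne : ξ ^ m ≠ 1 := fun h => hm ((hξ.pow_eq_one_iff_dvd m).mp h)
    have h0 : ∑ i ∈ Finset.range r, ξ ^ (m * i) = 0 := by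
      simp_rw [pow_mul]
      rw [geom_sum_eq hne]
      have : (ξ ^ m) ^ r = 1 := by rw [← pow_mul, mul_comm, pow_mul, hξ.pow_eq_one, one_pow]
      rw [this, sub_self, zero_div]
    rw [Finset.sum_Ico_eq_sub _ (by omega : 1 ≤ r), h0]
    simp
  -- the second-difference recurrence
  have hstep : ∀ m : ℕ, m + 2 ≤ r → S (m + 2) = 2 * S (m + 1) - S m + 1 := by
    intro m hm
    have hnd : ¬ (r ∣ (m + 1)) := by
      intro h; have := Nat.le_of_dvd (by omega) h; omega
    have hsum := hsum_pow (m + 1) hnd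
    have key : S (m + 2) - 2 * S (m + 1) + S m = - ∑ i ∈ Finset.Ico 1 r, ξ ^ ((m + 1) * i) := by
      rw [hS]
      simp only
      rw [Finset.mul_sum, ← Finset.sum_sub_distrib, ← Finset.sum_add_distrib,
        ← Finset.sum_neg_distrib]
      apply Finset.sum_congr rfl
      intro i hi
      have h1 : ξ ^ i ≠ 1 := hxne i hi
      have h2 : ξ ^ i ≠ 0 := hx0 i
      have h3 : 1 - ξ ^ i ≠ 0 := sub_ne_zero.mpr (Ne.symm h1)
      have h4 : 1 - (ξ ^ i)⁻¹ ≠ 0 := sub_ne_zero.mpr (fun h => h1 (inv_eq_one.mp h.symm))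
      have e1 : ξ ^ ((m + 2) * i) = (ξ ^ i) ^ (m + 2) := by rw [mul_comm, pow_mul]
      have e2 : ξ ^ ((m + 1) * i) = (ξ ^ i) ^ (m + 1) := by rw [mul_comm, pow_mul]
      have e3 : ξ ^ (m * i) = (ξ ^ i) ^ m := by rw [mul_comm, pow_mul]
      rw [e1, e2, e3]
      generalize ξ ^ i = x at h1 h2 h3 h4 ⊢
      have hD : (1 - x) * (1 - x⁻¹) ≠ 0 := mul_ne_zero h3 h4
      rw [← mul_div_assoc, div_sub_div_same, ← add_div, div_eq_iff hD]
      field_simp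
      ring
    rw [hsum] at key
    linear_combination key
  -- the quadratic formula for S m
  have hform : ∀ m, m ≤ r → S m = S 0 + (m : ℂ) * (S 1 - S 0) + (m : ℂ) * ((m : ℂ) - 1) / 2 := by
    intro m
    induction m using Nat.strong_induction_on with
    | _ m ih =>
      match m with
      | 0 => intro _; simp
      | 1 => intro _; push_cast; ring
      | (n + 2) =>
        intro h
        rw [hstep n h, ih (n + 1) (by omega) (by omega), ih n (by omega) (by omega)]
        push_cast; ring
  -- periodicity : S r = S 0
  have hSr : S r = S 0 := by
    rw [hS]
    apply Finset.sum_congr rfl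
    intro i _
    rw [pow_mul, hξ.pow_eq_one, one_pow, zero_mul, pow_zero]
  -- slope
  have hB : S 1 - S 0 = -(((r : ℂ) - 1) / 2) := by
    have h1 := hform r le_rfl
    rw [hSr] at h1
    have h2 : (r : ℂ) * (S 1 - S 0) = (r : ℂ) * (-(((r : ℂ) - 1) / 2)) := by
      linear_combination -h1
    exact mul_left_cancel₀ hr0 h2
  -- total sum is zero
  have hsum0 : ∑ m ∈ Finset.range r, S m = 0 := by
    rw [hS]
    simp only
    rw [Finset.sum_comm]
    apply Finset.sum_eq_zero
    intro i hi
    rw [← Finset.sum_div]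
    have : ∑ m ∈ Finset.range r, ξ ^ (m * i) = 0 := by
      simp_rw [mul_comm, pow_mul]
      exact hgeom i hi
    rw [this, zero_div]
  -- compute S 0
  have hS0 : S 0 = ((r : ℂ) ^ 2 - 1) / 12 := by
    have h3 : ∑ m ∈ Finset.range r,
        (S 0 + (m : ℂ) * (S 1 - S 0) + (m : ℂ) * ((m : ℂ) - 1) / 2) = 0 := by
      rw [← hsum0]
      exact Finset.sum_congr rfl fun m hm => (hform m (le_of_lt (Finset.mem_range.mp hm))).symm
    rw [Finset.sum_add_distrib, Finset.sum_add_distrib, Finset.sum_const, ← Finset.sum_mul,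
      ← Finset.sum_div, aux_sum1, aux_sum2, hB, Finset.card_range, nsmul_eq_mul] at h3
    have h4 : (r : ℂ) * S 0 = (r : ℂ) * (((r : ℂ) ^ 2 - 1) / 12) := by
      linear_combination h3
    exact mul_left_cancel₀ hr0 h4
  have hqr : q ≤ r := by omega
  have hfq := hform q hqr
  rw [hB, hS0] at hfq
  show S q = _
  rw [hfq]
  ring
end
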